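/- For every reflexive digraph G, the radical equivalence of G is a subrelation of the strong equivalence of G. -/

import Mathlib

namespace DigraphHM9

/-- One step of a symmetric path: edges in both directions. -/
def SymStep {V : Type*} (E : V → V → Prop) : V → V → Prop :=
  fun u v => E u v ∧ E v u

/-- The extreme equivalence: being connected by a symmetric path. -/
def ExtremeEq {V : Type*} (E : V → V → Prop) : V → V → Prop :=
  Relation.ReflTransGen (SymStep E)

/-- The edge relation of the quotient digraph `G/ν`, pulled back to vertices:
`a → b` modulo `ν` iff some `a' ∈ a/ν` and `b' ∈ b/ν` satisfy `E a' b'`.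
For an equivalence `ν`, the `ν`-classes `A = a/ν` and `B = b/ν` satisfy `A → B`
in `G/ν` iff `SatEdge E ν a b`. -/
def SatEdge {V : Type*} (E ν : V → V → Prop) : V → V → Prop :=
  fun a b => ∃ a' b', ν a a' ∧ ν b b' ∧ E a' b'

/-- The increasing sequence `ν₀ ⊆ ν₁ ⊆ …` defining the radical equivalence:
`ν₀` is the extreme equivalence of `G`, and `νᵢ₊₁` relates `a` and `b` iff their
`νᵢ`-classes are related by the extreme equivalence of the quotient `G/νᵢ`. -/
def RadSeq {V : Type*} (E : V → V → Prop) : ℕ → (V → V → Prop)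
  | 0 => ExtremeEq E
  | (i + 1) => fun a b => RadSeq E i a b ∨ ExtremeEq (SatEdge E (RadSeq E i)) a b

/-- The radical equivalence `ν = ⋃ᵢ νᵢ`. -/
def Radical {V : Type*} (E : V → V → Prop) : V → V → Prop :=
  fun a b => ∃ i : ℕ, RadSeq E i a b

/-- The strong equivalence: directed paths both ways. -/
def StrongEq {V : Type*} (E : V → V → Prop) : V → V → Prop :=
  fun a b => Relation.ReflTransGen E a b ∧ Relation.ReflTransGen E b a

/-! Strong equivalence is an equivalence that contains every symmetric step, so it contains the
extreme equivalence. Moreover, if `ν` lies inside it, an edge between two `ν`-classes extends, inside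
the classes, to a directed path between any of their members; hence symmetric steps of `G/ν`
are again strongly equivalent, and induction along `ν₀ ⊆ ν₁ ⊆ …` gives the claim. -/

open Relation

section

variable {V : Type*} {E : V → V → Prop}

theorem strongEq_equivalence : Equivalence (StrongEq E) where
  refl _ := ⟨.refl, .refl⟩
  symm h := ⟨h.2, h.1⟩
  trans h₁ h₂ := ⟨h₁.1.trans h₂.1, h₂.2.trans h₁.2⟩

theorem symStep_le_strongEq : SymStep E ≤ StrongEq E := fun _ _ ⟨hab, hba⟩ =>
  ⟨.single hab, .single hba⟩

theorem extremeEq_le_strongEq {R : V → V → Prop} (h : SymStep R ≤ StrongEq E) :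
    ExtremeEq R ≤ StrongEq E :=
  reflTransGen_le_of_equivalence_of_le strongEq_equivalence h

theorem satEdge_le_reflTransGen {ν : V → V → Prop} (hν : ν ≤ StrongEq E) :
    SatEdge E ν ≤ ReflTransGen E := by
  rintro a b ⟨a', b', haa', hbb', hab'⟩
  exact ((hν a a' haa').1.tail hab').trans (hν b b' hbb').2

theorem symStep_satEdge_le_strongEq {ν : V → V → Prop} (hν : ν ≤ StrongEq E) :
    SymStep (SatEdge E ν) ≤ StrongEq E := fun a b ⟨hab, hba⟩ =>
  ⟨satEdge_le_reflTransGen hν a b hab, satEdge_le_reflTransGen hν b a hba⟩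

theorem radSeq_le_strongEq (i : ℕ) : RadSeq E i ≤ StrongEq E := by
  induction i with
  | zero => exact extremeEq_le_strongEq symStep_le_strongEq
  | succ i ih =>
    rintro a b (hi | hquot)
    · exact ih a b hi
    · exact extremeEq_le_strongEq (symStep_satEdge_le_strongEq ih) a b hquot

end

theorem radical_subset_strongEq_general {V : Type*} (E : V → V → Prop) :
    ∀ a b : V, Radical E a b → StrongEq E a b := by
  rintro a b ⟨i, hi⟩
  exact radSeq_le_strongEq i a b hi

/-- For every reflexive digraph, the radical equivalence is a subrelation of the
strong equivalence. -/
theorem radical_subset_strongEq {V : Type*} (E : V → V → Prop)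
    (hrefl : ∀ v, E v v) :
    ∀ a b : V, Radical E a b → StrongEq E a b :=
  radical_subset_strongEq_general E

end DigraphHM9
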